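/- arXiv:1601.02793 — 2 statements merged into one kernel-verified Lean document; each statement's English description precedes it below -/
import Mathlib

section
/- The maximal faces (facets) of the staircase complex 𝔅(P,n) are precisely the sets T_*(φ) where φ ∈ Hom(P,[n]) is upper normal, i.e., φ = (φ_-)^+. -/
/-!
A staircase face `F` is a facet iff it contains every point `(p, i)` compatible with it, i.e. with
`x.2 ≤ i` for `x ∈ F` below `p` and `i ≤ y.2` for `y ∈ F` above `p`. For a facet every fibre is
nonempty, and `φ p := max {i | (p, i) ∈ F}` is isotone with `F ⊆ T_*(φ)`; since `T_*(φ)` is always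
a face, `F = T_*(φ)`. For isotone `φ`, the points over `p` compatible with `T_*(φ)` are those with
`φ₋(p) ≤ i ≤ (φ₋)⁺(p)`, while `T_*(φ)` itself has `φ₋(p) ≤ i ≤ φ(p)`; as `φ ≤ (φ₋)⁺` always,
`T_*(φ)` is a facet exactly when `φ = (φ₋)⁺`.
-/

variable {P : Type*} [PartialOrder P] [Fintype P]

/-- `φ₋(p) = max {φ q | q < p}`, the max of the empty set being the bottom element of `[n]`. -/
def phiMinus [DecidableRel ((· < ·) : P → P → Prop)] {n : ℕ} (hn : 0 < n)
    (φ : P → Fin n) (p : P) : Fin n :=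
  (insert (⟨0, hn⟩ : Fin n) ((Finset.univ.filter fun q => q < p).image φ)).sup'
    (Finset.insert_nonempty _ _) id

/-- `φ⁺(p) = min {φ q | p < q}`, the min of the empty set being the top element of `[n]`. -/
def phiPlus [DecidableRel ((· < ·) : P → P → Prop)] {n : ℕ} (hn : 0 < n)
    (φ : P → Fin n) (p : P) : Fin n :=
  (insert (⟨n - 1, by omega⟩ : Fin n) ((Finset.univ.filter fun q => p < q).image φ)).inf'
    (Finset.insert_nonempty _ _) id

/-- `T_*(φ) = {(p,i) | φ q ≤ i ≤ φ p for all q < p}`. -/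
def Tstar {n : ℕ} (φ : P → Fin n) : Set (P × Fin n) :=
  {x | x.2 ≤ φ x.1 ∧ ∀ q : P, q < x.1 → φ q ≤ x.2}

/-- A staircase face is a subset of P × [n] containing no pair (p,i), (q,j) with
p < q in P and i > j in [n]; these are the faces of the staircase complex 𝔅(P,n). -/
def IsStaircaseFace {n : ℕ} (F : Set (P × Fin n)) : Prop :=
  ∀ x ∈ F, ∀ y ∈ F, x.1 < y.1 → ¬ y.2 < x.2

section StaircaseFaces

variable {Q : Type*} [PartialOrder Q] {n : ℕ}

theorem isStaircaseFace_tstar (φ : Q → Fin n) : IsStaircaseFace (Tstar φ) :=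
  fun x hx _ hy hxy => not_lt.2 (hx.1.trans (hy.2 x.1 hxy))

theorem IsStaircaseFace.insert {F : Set (Q × Fin n)} (hF : IsStaircaseFace F) {p : Q}
    {i : Fin n} (hl : ∀ x ∈ F, x.1 < p → x.2 ≤ i) (hr : ∀ y ∈ F, p < y.1 → i ≤ y.2) :
    IsStaircaseFace (insert (p, i) F) := by
  rintro x (rfl | hx) y (rfl | hy) hxy
  · exact absurd hxy (lt_irrefl _)
  · exact not_lt.2 (hr y hy hxy)
  · exact not_lt.2 (hl x hx hxy)
  · exact hF x hx y hy hxy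

end StaircaseFaces

section Facets

variable {n : ℕ}

theorem exists_mem_fiber_of_maximal (hn : 0 < n) {F : Set (P × Fin n)}
    (hF : Maximal IsStaircaseFace F) (p : P) : ∃ i, (p, i) ∈ F := by
  rcases {x ∈ F | x.1 < p}.eq_empty_or_nonempty with hbelow | hbelow
  · refine ⟨⟨0, hn⟩, hF.mem_of_prop_insert (hF.prop.insert ?_ ?_)⟩
    · exact fun x hx hxp => (Set.eq_empty_iff_forall_notMem.1 hbelow x ⟨hx, hxp⟩).elim
    · exact fun y _ _ => Fin.mk_le_of_le_val (Nat.zero_le _)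
  · obtain ⟨x, ⟨hx, hxp⟩, hxmax⟩ := Set.exists_max_image _ Prod.snd (Set.toFinite _) hbelow
    refine ⟨x.2, hF.mem_of_prop_insert (hF.prop.insert (fun z hz hzp => hxmax z ⟨hz, hzp⟩) ?_)⟩
    exact fun y hy hpy => not_lt.1 (hF.prop x hx y hy (hxp.trans hpy))

theorem exists_eq_tstar_of_maximal (hn : 0 < n) {F : Set (P × Fin n)}
    (hF : Maximal IsStaircaseFace F) : ∃ φ : P → Fin n, Monotone φ ∧ F = Tstar φ := by
  choose φ hφF hφmax using fun p => Set.exists_max_image {i | (p, i) ∈ F} id (Set.toFinite _)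
    (exists_mem_fiber_of_maximal hn hF p)
  have hφ : Monotone φ := monotone_iff_forall_lt.2 fun p q hpq =>
    not_lt.1 (hF.prop _ (hφF p) _ (hφF q) hpq)
  have hsub : F ⊆ Tstar φ := fun x hx =>
    ⟨hφmax x.1 x.2 hx, fun q hq => not_lt.1 (hF.prop _ (hφF q) _ hx hq)⟩
  exact ⟨φ, hφ, hF.eq_of_subset (isStaircaseFace_tstar φ) hsub⟩

end Facets

section UpperNormal

variable [DecidableRel ((· < ·) : P → P → Prop)] {n : ℕ} (hn : 0 < n) {φ : P → Fin n}
  {p q : P} {i : Fin n}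

theorem phiMinus_le_iff : phiMinus hn φ p ≤ i ↔ ∀ q, q < p → φ q ≤ i := by
  rw [phiMinus, Finset.sup'_le_iff, Finset.forall_mem_insert, Finset.forall_mem_image]
  simp only [Finset.mem_filter, Finset.mem_univ, true_and, id]
  exact and_iff_right (Fin.mk_le_of_le_val (Nat.zero_le _))

theorem le_phiPlus_iff : i ≤ phiPlus hn φ p ↔ ∀ q, p < q → i ≤ φ q := by
  rw [phiPlus, Finset.le_inf'_iff, Finset.forall_mem_insert, Finset.forall_mem_image]
  simp only [Finset.mem_filter, Finset.mem_univ, true_and, id]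
  exact and_iff_right (Fin.le_def.2 (Nat.le_sub_one_of_lt i.isLt))

theorem phiPlus_lt_iff : phiPlus hn φ p < i ↔ ∃ q, p < q ∧ φ q < i := by
  simpa using (le_phiPlus_iff hn).not

theorem le_phiMinus (h : q < p) : φ q ≤ phiMinus hn φ p :=
  (phiMinus_le_iff hn).1 le_rfl q h

theorem phiPlus_le (h : p < q) : phiPlus hn φ p ≤ φ q :=
  (le_phiPlus_iff hn).1 le_rfl q h

theorem le_phiPlus_phiMinus : φ p ≤ phiPlus hn (phiMinus hn φ) p :=
  (le_phiPlus_iff hn).2 fun _ h => le_phiMinus hn h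

theorem phiMinus_le_self (hφ : Monotone φ) : phiMinus hn φ p ≤ φ p :=
  (phiMinus_le_iff hn).2 fun _ h => hφ h.le

theorem mem_tstar_iff {x : P × Fin n} :
    x ∈ Tstar φ ↔ phiMinus hn φ x.1 ≤ x.2 ∧ x.2 ≤ φ x.1 := by
  rw [phiMinus_le_iff, and_comm]
  rfl

theorem eq_phiPlus_phiMinus_of_maximal (hφ : Monotone φ)
    (hT : Maximal IsStaircaseFace (Tstar φ)) : φ = phiPlus hn (phiMinus hn φ) := by
  funext p
  refine le_antisymm (le_phiPlus_phiMinus hn) ?_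
  have hmem : (p, phiPlus hn (phiMinus hn φ) p) ∈ Tstar φ := hT.mem_of_prop_insert <|
    hT.prop.insert (fun x hx hxp => hx.1.trans ((hφ hxp.le).trans (le_phiPlus_phiMinus hn)))
      fun y hy hpy => (phiPlus_le hn hpy).trans ((mem_tstar_iff hn).1 hy).1
  exact hmem.1

theorem maximal_isStaircaseFace_tstar (hφ : Monotone φ)
    (hnorm : φ = phiPlus hn (phiMinus hn φ)) : Maximal IsStaircaseFace (Tstar φ) := by
  refine ⟨isStaircaseFace_tstar φ, fun G hG hsub => ?_⟩
  rintro ⟨p, i⟩ hpi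
  refine ⟨not_lt.1 fun hlt => ?_, fun q hq =>
    not_lt.1 (hG (q, φ q) (hsub ⟨le_rfl, fun r hr => hφ hr.le⟩) _ hpi hq)⟩
  obtain ⟨q, hpq, hqi⟩ := (phiPlus_lt_iff hn).1 ((congrFun hnorm p).symm.trans_lt hlt)
  have hq : (q, phiMinus hn φ q) ∈ Tstar φ :=
    (mem_tstar_iff hn).2 ⟨le_rfl, phiMinus_le_self hn hφ⟩
  exact hG _ hpi _ (hsub hq) hpq hqi

end UpperNormal

/-- The facets (maximal faces) of the staircase complex 𝔅(P,n) are precisely the sets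
T_*(φ) where φ is an upper normal isotone map, i.e. φ = (φ₋)⁺. -/
theorem stmt5 [DecidableRel ((· < ·) : P → P → Prop)] {n : ℕ} (hn : 0 < n)
    (F : Set (P × Fin n)) :
    (IsStaircaseFace F ∧ ∀ G : Set (P × Fin n), IsStaircaseFace G → F ⊆ G → F = G) ↔
      (∃ φ : P → Fin n, Monotone φ ∧ φ = phiPlus hn (phiMinus hn φ) ∧ F = Tstar φ) := by
  rw [← maximal_subset_iff]
  refine ⟨fun hF => ?_, ?_⟩
  · obtain ⟨φ, hφ, rfl⟩ := exists_eq_tstar_of_maximal hn hF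
    exact ⟨φ, hφ, eq_phiPlus_phiMinus_of_maximal hn hφ hF, rfl⟩
  · rintro ⟨φ, hφ, hnorm, rfl⟩
    exact maximal_isStaircaseFace_tstar hn hφ hnorm
end

section
/- Let J be a poset ideal in Hom(P,[n]) with ∅ ≠ J ⊊ Hom(P,[n]). Then there exists a face G of Δ(J) of cardinality |P|·(n−1) − 1 that is contained in exactly one facet of Δ(J). -/
/-!
The facets of Δ(J) are the complements of the graphs Γφ, φ ∈ J. Since J is nonempty and proper,
walking from a map in J to one outside J by changing one value at a time produces φ ∈ J and a
single-point modification φ' = φ[p ↦ j] ∉ J. Removing the vertex (p, j) from the facet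
(Γφ)ᶜ leaves a face whose only possible facets are (Γφ)ᶜ and (Γφ')ᶜ, and the latter is not a facet.
-/

variable {P : Type*} [PartialOrder P] [Fintype P] [DecidableEq P]

/-- The graph `Γφ = {(p, φ p) | p ∈ P}` of a map φ : P → [n], as a finite set. -/
def GammaF {n : ℕ} (φ : P → Fin n) : Finset (P × Fin n) :=
  Finset.univ.image fun p => (p, φ p)

/-- F is a face of Δ(J) iff F misses the graph Γφ of some φ ∈ J. -/
def IsFace {n : ℕ} (J : Set (P → Fin n)) (F : Finset (P × Fin n)) : Prop :=
  ∃ φ ∈ J, ∀ p : P, (p, φ p) ∉ F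

/-- A facet of Δ(J) is a face maximal under inclusion. -/
def IsFacet {n : ℕ} (J : Set (P → Fin n)) (F : Finset (P × Fin n)) : Prop :=
  IsFace J F ∧ ∀ G : Finset (P × Fin n), IsFace J G → F ⊆ G → F = G

theorem Set.exists_update_notMem {ι : Type*} [Fintype ι] [DecidableEq ι] {β : ι → Type*}
    {S : Set (∀ i, β i)} (hne : S.Nonempty) (hS : S ≠ Set.univ) :
    ∃ φ ∈ S, ∃ i b, Function.update φ i b ∉ S := by
  by_contra! hclosed
  obtain ⟨φ, hφ⟩ := hne
  refine hS (Set.eq_univ_of_forall fun ψ => ?_)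
  have hpiecewise (s : Finset ι) : s.piecewise ψ φ ∈ S := by
    induction s using Finset.induction_on with
    | empty => rwa [Finset.piecewise_empty]
    | insert i s _ ih => rw [Finset.piecewise_insert]; exact hclosed _ ih i (ψ i)
  simpa using hpiecewise Finset.univ

section Facets

omit [PartialOrder P]

variable {n : ℕ} {J : Set (P → Fin n)}

theorem mem_GammaF {φ : P → Fin n} {x : P × Fin n} : x ∈ GammaF φ ↔ x.2 = φ x.1 := by
  obtain ⟨p, y⟩ := x
  simp [GammaF, Prod.ext_iff, eq_comm]

theorem card_compl_GammaF (φ : P → Fin n) :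
    (GammaF φ)ᶜ.card = Fintype.card P * (n - 1) := by
  have hGamma : (GammaF φ).card = Fintype.card P :=
    Finset.card_image_of_injective _ fun _ _ h => congrArg Prod.fst h
  rw [Finset.card_compl, hGamma, Fintype.card_prod, Fintype.card_fin, Nat.mul_sub_one]

theorem isFace_iff_subset_compl_GammaF {F : Finset (P × Fin n)} :
    IsFace J F ↔ ∃ φ ∈ J, F ⊆ (GammaF φ)ᶜ := by
  refine exists_congr fun φ => and_congr_right fun _ => ?_
  refine ⟨fun h x hx => Finset.mem_compl.2 fun hxφ => ?_, fun h p hp => ?_⟩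
  · exact h x.1 (mem_GammaF.1 hxφ ▸ hx)
  · exact Finset.mem_compl.1 (h hp) (mem_GammaF.2 rfl)

theorem GammaF_subset_GammaF_iff {φ ψ : P → Fin n} : GammaF ψ ⊆ GammaF φ ↔ ψ = φ := by
  refine ⟨fun h => funext fun p => ?_, fun h => h ▸ subset_rfl⟩
  exact mem_GammaF.1 (h (mem_GammaF (x := (p, ψ p)) |>.2 rfl))

theorem isFacet_compl_GammaF {φ : P → Fin n} (hφ : φ ∈ J) : IsFacet J (GammaF φ)ᶜ := by
  refine ⟨isFace_iff_subset_compl_GammaF.2 ⟨φ, hφ, subset_rfl⟩, fun G hG hφG => ?_⟩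
  obtain ⟨ψ, -, hGψ⟩ := isFace_iff_subset_compl_GammaF.1 hG
  have hψφ : ψ = φ :=
    GammaF_subset_GammaF_iff.1 (Finset.compl_subset_compl.1 (hφG.trans hGψ))
  exact hφG.antisymm (hψφ ▸ hGψ)

theorem IsFacet.exists_eq_compl_GammaF {F : Finset (P × Fin n)} (hF : IsFacet J F) :
    ∃ φ ∈ J, F = (GammaF φ)ᶜ := by
  obtain ⟨φ, hφ, hFφ⟩ := isFace_iff_subset_compl_GammaF.1 hF.1
  exact ⟨φ, hφ, hF.2 _ (isFacet_compl_GammaF hφ).1 hFφ⟩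

/-- Every value of `ψ` off the graph of `φ` must be the removed vertex `(p, j)`. -/
theorem eq_or_eq_update_of_erase_subset_compl_GammaF {φ ψ : P → Fin n} {p : P} {j : Fin n}
    (h : (GammaF φ)ᶜ.erase (p, j) ⊆ (GammaF ψ)ᶜ) : ψ = φ ∨ ψ = Function.update φ p j := by
  have hoff (q : P) (hq : ψ q ≠ φ q) : (q, ψ q) = (p, j) := by
    by_contra hne
    have hmem : (q, ψ q) ∈ (GammaF φ)ᶜ.erase (p, j) := by
      simp [Finset.mem_erase, hne, mem_GammaF, hq]
    exact Finset.mem_compl.1 (h hmem) (mem_GammaF.2 rfl)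
  by_cases hp : ψ p = φ p
  · left
    funext q
    by_contra hq
    obtain ⟨rfl, -⟩ := Prod.ext_iff.1 (hoff q hq)
    exact hq hp
  · right
    funext q
    rcases eq_or_ne q p with rfl | hqp
    · simpa using (Prod.ext_iff.1 (hoff q hp)).2
    · rw [Function.update_of_ne hqp]
      by_contra hq
      exact hqp (Prod.ext_iff.1 (hoff q hq)).1

theorem existsUnique_isFacet_erase_subset {φ : P → Fin n} (hφ : φ ∈ J) {p : P} {j : Fin n}
    (hupdate : Function.update φ p j ∉ J) :
    ∃! F : Finset (P × Fin n), IsFacet J F ∧ (GammaF φ)ᶜ.erase (p, j) ⊆ F := by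
  refine ⟨(GammaF φ)ᶜ, ⟨isFacet_compl_GammaF hφ, Finset.erase_subset _ _⟩, ?_⟩
  rintro F ⟨hF, hsub⟩
  obtain ⟨ψ, hψ, rfl⟩ := hF.exists_eq_compl_GammaF
  rcases eq_or_eq_update_of_erase_subset_compl_GammaF hsub with rfl | rfl
  · rfl
  · exact absurd hψ hupdate

end Facets

theorem stmt17_general {n : ℕ} (J : Set (P → Fin n))
    (hJne : J.Nonempty)
    (hproper : ∃ ψ : P → Fin n, Monotone ψ ∧ ψ ∉ J) :
    ∃ G : Finset (P × Fin n), IsFace J G ∧ G.card = Fintype.card P * (n - 1) - 1 ∧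
      ∃! F : Finset (P × Fin n), IsFacet J F ∧ G ⊆ F := by
  obtain ⟨ψ, -, hψ⟩ := hproper
  obtain ⟨φ, hφ, p, j, hupdate⟩ :=
    Set.exists_update_notMem hJne fun hJ => hψ (hJ ▸ Set.mem_univ ψ)
  have hj : j ≠ φ p := by
    rintro rfl
    exact hupdate (by rwa [Function.update_eq_self])
  have hvertex : (p, j) ∈ (GammaF φ)ᶜ := by simpa [mem_GammaF] using hj
  refine ⟨(GammaF φ)ᶜ.erase (p, j), ?_, ?_, existsUnique_isFacet_erase_subset hφ hupdate⟩
  · exact isFace_iff_subset_compl_GammaF.2 ⟨φ, hφ, Finset.erase_subset _ _⟩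
  · rw [Finset.card_erase_of_mem hvertex, card_compl_GammaF]

/-- Let J be a poset ideal in Hom(P,[n]) with ∅ ≠ J ⊊ Hom(P,[n]).  Then some face G of Δ(J)
of cardinality |P|·(n−1) − 1 is contained in exactly one facet of Δ(J). -/
theorem stmt17 [Nonempty P] {n : ℕ} (J : Set (P → Fin n))
    (hJ1 : ∀ φ ∈ J, Monotone φ)
    (hJ2 : ∀ φ ∈ J, ∀ ψ : P → Fin n, Monotone ψ → ψ ≤ φ → ψ ∈ J)
    (hJne : J.Nonempty)
    (hproper : ∃ ψ : P → Fin n, Monotone ψ ∧ ψ ∉ J) :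
    ∃ G : Finset (P × Fin n), IsFace J G ∧ G.card = Fintype.card P * (n - 1) - 1 ∧
      ∃! F : Finset (P × Fin n), IsFacet J F ∧ G ⊆ F :=
  stmt17_general J hJne hproper
end
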